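/- arXiv:2605.24611 — 5 statements merged into one kernel-verified Lean document; each statement's English description precedes it below -/
import Mathlib

section
/- For every integer ℓ ≥ 1, the number M₂(ℓ) of aperiodic binary words of length ℓ satisfies the real inequality |M₂(ℓ) − 2^ℓ| ≤ τ(ℓ) · 2^{ℓ/2}, where τ(ℓ) is the number of positive divisors of ℓ and 2^{ℓ/2} is the real power. -/
/-- A binary word `w : ZMod ℓ → Bool` is *aperiodic* if every cyclic shift by `k` with
`0 < k < ℓ` differs from `w`. -/
def AperiodicWord {ℓ : ℕ} (w : ZMod ℓ → Bool) : Prop :=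
  ∀ k : ℕ, 0 < k → k < ℓ → (fun i => w (i + (k : ZMod ℓ))) ≠ w

/-- `M₂ ℓ` is the number of aperiodic binary words of length `ℓ`. -/
noncomputable def M₂ (ℓ : ℕ) : ℕ :=
  Nat.card {w : ZMod ℓ → Bool // AperiodicWord w}

private lemma shift_iter {ℓ : ℕ} (w : ZMod ℓ → Bool) (c : ℕ)
    (h : ∀ i, w (i + (c : ZMod ℓ)) = w i) :
    ∀ (m : ℕ) (i : ZMod ℓ), w (i + ((m * c : ℕ) : ZMod ℓ)) = w i := by
  intro m
  induction m with
  | zero => simp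
  | succ m ih =>
    intro i
    have : ((((m + 1) * c : ℕ)) : ZMod ℓ) = ((m * c : ℕ) : ZMod ℓ) + (c : ZMod ℓ) := by
      push_cast; ring
    rw [this, ← add_assoc, h, ih]

/-- For every `ℓ ≥ 1`, `|M₂(ℓ) − 2^ℓ| ≤ τ(ℓ) · 2^{ℓ/2}`, where `τ(ℓ)` is the number of
positive divisors of `ℓ` and `2^{ℓ/2}` is the real power. -/
theorem stmt1 (ℓ : ℕ) (hℓ : 1 ≤ ℓ) :
    |(M₂ ℓ : ℝ) - 2 ^ ℓ| ≤ (ℓ.divisors.card : ℝ) * (2 : ℝ) ^ ((ℓ : ℝ) / 2) := by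
  classical
  haveI : NeZero ℓ := ⟨by omega⟩
  -- cardinality setup
  have hcardall : Fintype.card (ZMod ℓ → Bool) = 2 ^ ℓ := by
    simp [ZMod.card]
  set A : Finset (ZMod ℓ → Bool) := Finset.univ.filter (fun w => AperiodicWord w) with hA
  set P : Finset (ZMod ℓ → Bool) := Finset.univ.filter (fun w => ¬ AperiodicWord w) with hP
  have hM : M₂ ℓ = A.card := by
    rw [M₂, Nat.card_eq_fintype_card, Fintype.card_subtype]
  have hsplit : A.card + P.card = 2 ^ ℓ := by
    rw [hA, hP, Finset.card_filter_add_card_filter_not, Finset.card_univ, hcardall]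
  -- for each d, words of period d
  set F : ℕ → Finset (ZMod ℓ → Bool) :=
    fun d => Finset.univ.filter (fun w => ∀ i, w (i + (d : ZMod ℓ)) = w i) with hF
  -- P is covered by the F d over proper divisors
  have hsub : P ⊆ ℓ.properDivisors.biUnion F := by
    intro w hw
    rw [hP, Finset.mem_filter] at hw
    obtain ⟨-, hw⟩ := hw
    rw [AperiodicWord] at hw
    push_neg at hw
    obtain ⟨k, hk0, hkℓ, hk⟩ := hw
    have hk' : ∀ i, w (i + (k : ZMod ℓ)) = w i := fun i => congrFun hk i
    set d := Nat.gcd k ℓ with hd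
    have hdpos : 0 < d := Nat.gcd_pos_of_pos_left ℓ hk0
    have hdlt : d < ℓ := lt_of_le_of_lt (Nat.gcd_le_left ℓ hk0) hkℓ
    have hddvd : d ∣ ℓ := Nat.gcd_dvd_right k ℓ
    -- w has period d
    have hdper : ∀ i, w (i + (d : ZMod ℓ)) = w i := by
      have hbez : (d : ℤ) = k * Nat.gcdA k ℓ + ℓ * Nat.gcdB k ℓ := Nat.gcd_eq_gcd_ab k ℓ
      set c : ZMod ℓ := ((Nat.gcdA k ℓ : ℤ) : ZMod ℓ) with hc
      have hcast : (d : ZMod ℓ) = (k : ZMod ℓ) * c := by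
        have := congrArg (fun z : ℤ => (z : ZMod ℓ)) hbez
        push_cast at this
        simpa [ZMod.natCast_self] using this
      have hcv : c = ((c.val : ℕ) : ZMod ℓ) := by
        simp [ZMod.natCast_val, ZMod.cast_id]
      have hdc : (d : ZMod ℓ) = ((c.val * k : ℕ) : ZMod ℓ) := by
        push_cast
        rw [hcast, ← hcv]; ring
      intro i
      rw [hdc]
      exact shift_iter w k hk' c.val i
    simp only [Finset.mem_biUnion]
    exact ⟨d, Nat.mem_properDivisors.mpr ⟨hddvd, hdlt⟩, by
      rw [hF]; simp only [Finset.mem_filter, Finset.mem_univ, true_and]; exact hdper⟩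
  -- card of F d is at most 2^d for d a positive divisor
  have hFcard : ∀ d ∈ ℓ.properDivisors, (F d).card ≤ 2 ^ d := by
    intro d hdmem
    obtain ⟨hddvd, hdlt⟩ := Nat.mem_properDivisors.mp hdmem
    have hdpos : 0 < d := Nat.pos_of_dvd_of_pos hddvd (by omega)
    have key : ∀ w ∈ F d, ∀ i : ZMod ℓ, w i = w ((i.val % d : ℕ) : ZMod ℓ) := by
      intro w hw i
      rw [hF] at hw
      simp only [Finset.mem_filter, Finset.mem_univ, true_and] at hw
      have hiv : i = ((i.val % d : ℕ) : ZMod ℓ) + (((i.val / d) * d : ℕ) : ZMod ℓ) := by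
        rw [← Nat.cast_add, Nat.mod_add_div']
        simp [ZMod.natCast_val, ZMod.cast_id]
      conv_lhs => rw [hiv]
      exact shift_iter w d hw (i.val / d) _
    have hinj : Set.InjOn (fun w : ZMod ℓ → Bool => (fun j : Fin d => w ((j : ℕ) : ZMod ℓ)))
        (F d : Set (ZMod ℓ → Bool)) := by
      intro w₁ h₁ w₂ h₂ heq
      funext i
      have hlt : i.val % d < d := Nat.mod_lt _ hdpos
      have := congrFun heq ⟨i.val % d, hlt⟩
      simp only at this
      rw [key w₁ h₁ i, key w₂ h₂ i]
      exact this
    calc (F d).card ≤ (Finset.univ : Finset (Fin d → Bool)).card := by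
          apply Finset.card_le_card_of_injOn _ (fun w _ => Finset.mem_univ _) hinj
      _ = 2 ^ d := by simp
  -- combine: P.card ≤ sum ≤ τ * 2^{ℓ/2}
  have hPcard : (P.card : ℝ) ≤ (ℓ.divisors.card : ℝ) * (2 : ℝ) ^ ((ℓ : ℝ) / 2) := by
    have h1 : P.card ≤ ∑ d ∈ ℓ.properDivisors, (F d).card :=
      le_trans (Finset.card_le_card hsub) (Finset.card_biUnion_le)
    have h2 : (P.card : ℝ) ≤ ∑ d ∈ ℓ.properDivisors, ((F d).card : ℝ) := by
      exact_mod_cast h1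
    refine h2.trans ?_
    have h3 : ∀ d ∈ ℓ.properDivisors, ((F d).card : ℝ) ≤ (2 : ℝ) ^ ((ℓ : ℝ) / 2) := by
      intro d hdmem
      obtain ⟨hddvd, hdlt⟩ := Nat.mem_properDivisors.mp hdmem
      have hd2 : 2 * d ≤ ℓ := by
        obtain ⟨e, he⟩ := hddvd
        have : 2 ≤ e := by
          rcases Nat.lt_or_ge e 2 with h | h
          · interval_cases e <;> omega
          · exact h
        calc 2 * d ≤ e * d := Nat.mul_le_mul_right d this
          _ = ℓ := by rw [he]; ring
      calc ((F d).card : ℝ) ≤ ((2 ^ d : ℕ) : ℝ) := by exact_mod_cast hFcard d hdmem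
        _ = (2 : ℝ) ^ ((d : ℕ) : ℝ) := by
            rw [Real.rpow_natCast]; push_cast; ring
        _ ≤ (2 : ℝ) ^ ((ℓ : ℝ) / 2) := by
            apply Real.rpow_le_rpow_of_exponent_le one_le_two
            rw [le_div_iff₀ (by norm_num : (0:ℝ) < 2)]
            exact_mod_cast (by omega : d * 2 ≤ ℓ)
    calc ∑ d ∈ ℓ.properDivisors, ((F d).card : ℝ)
        ≤ ∑ _d ∈ ℓ.properDivisors, (2 : ℝ) ^ ((ℓ : ℝ) / 2) := Finset.sum_le_sum h3
      _ = (ℓ.properDivisors.card : ℝ) * (2 : ℝ) ^ ((ℓ : ℝ) / 2) := by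
          rw [Finset.sum_const, nsmul_eq_mul]
      _ ≤ (ℓ.divisors.card : ℝ) * (2 : ℝ) ^ ((ℓ : ℝ) / 2) := by
          apply mul_le_mul_of_nonneg_right _ (Real.rpow_nonneg (by norm_num) _)
          exact_mod_cast Finset.card_le_card (Nat.properDivisors_subset_divisors)
  -- finish
  have habs : |(M₂ ℓ : ℝ) - 2 ^ ℓ| = (P.card : ℝ) := by
    rw [hM]
    have : (2 : ℝ) ^ ℓ = (A.card : ℝ) + (P.card : ℝ) := by
      exact_mod_cast hsplit.symm
    rw [this]
    rw [abs_sub_comm]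
    rw [show (A.card : ℝ) + (P.card : ℝ) - (A.card : ℝ) = (P.card : ℝ) by ring]
    exact abs_of_nonneg (by positivity)
  rw [habs]
  exact hPcard
end

section
/- Let b : ℕ → ℕ satisfy b(m) < m for all large m and b(m)/m → 0 as m → ∞. For each m, set M = m − b(m) + 1 and z = ⌈4M⌉, and let Y₁, …, Y_z be independent random variables each uniformly distributed on {b(m), …, m}. Then there exist constants c₁, c₂, c₃ > 0 and m₀ such that for all m ≥ m₀, P(c₁ m² ≤ ∑_{i=1}^z Y_i ≤ c₂ m²) ≥ 1 − 2 exp(−c₃ m). -/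
/-!
Almost surely every `Yᵢ ≤ m`, and `z ≤ 8m`, so `∑ Yᵢ ≤ 8m²` almost surely. The lower tail
is a Chernoff bound at `t = -1/m`: by convexity `exp (-x) ≤ 1 - x/2` on `[0, 1]`, and
`𝔼 Yᵢ = (b + m)/2 ≥ m/2`, so `𝔼 exp (-Yᵢ/m) ≤ 3/4 ≤ exp (-1/4)`. Hence
`P(∑ Yᵢ ≤ m²/4) ≤ exp (m/4 - z/4) ≤ exp (-m/4)` as soon as `b ≤ m/2`.
-/

open MeasureTheory ProbabilityTheory Finset Real
open scoped ENNReal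

section Uniform

variable {Ω α : Type*} [MeasurableSpace Ω] [MeasurableSpace α] [DecidableEq α]

def IsUniformOn (μ : Measure Ω) (Y : Ω → α) (s : Finset α) : Prop :=
  ∀ a, μ {ω | Y ω = a} = if a ∈ s then (#s : ℝ≥0∞)⁻¹ else 0

variable [Countable α] [MeasurableSingletonClass α] {μ : Measure Ω} {Y : Ω → α} {s : Finset α}

lemma IsUniformOn.map_eq (hY : Measurable Y) (h : IsUniformOn μ Y s) :
    μ.map Y = (#s : ℝ≥0∞)⁻¹ • ∑ a ∈ s, Measure.dirac a := by
  refine Measure.ext_iff_singleton.2 fun a => ?_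
  rw [Measure.map_apply hY (measurableSet_singleton a)]
  simp only [Measure.smul_apply, Measure.coe_finsetSum, Finset.sum_apply, MeasurableSet.singleton,
    Measure.dirac_apply', Set.indicator_singleton, Pi.one_apply, sum_pi_single', smul_eq_mul,
    mul_ite, mul_one, mul_zero]
  exact h a

lemma IsUniformOn.ae_mem (hY : Measurable Y) (h : IsUniformOn μ Y s) : ∀ᵐ ω ∂μ, Y ω ∈ s := by
  refine ae_of_ae_map hY.aemeasurable ?_
  rw [h.map_eq hY, ae_iff]
  simp

lemma IsUniformOn.integral_comp (hY : Measurable Y) (h : IsUniformOn μ Y s) (g : α → ℝ) :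
    ∫ ω, g (Y ω) ∂μ = (#s : ℝ)⁻¹ * ∑ a ∈ s, g a := by
  rw [← integral_map hY.aemeasurable (Measurable.of_discrete).aestronglyMeasurable, h.map_eq hY,
    integral_smul_measure, integral_finsetSum_measure fun a _ => integrable_dirac enorm_lt_top]
  simp [integral_dirac]

end Uniform

theorem Finset.sum_Icc_id_mul_two (b m : ℕ) : (∑ a ∈ Icc b m, a) * 2 = #(Icc b m) * (b + m) := by
  rw [Nat.card_Icc, ← Ico_add_one_right_eq_Icc, sum_Ico_eq_sum_range, sum_add_distrib, sum_const,
    card_range, smul_eq_mul, add_mul, sum_range_id_mul_two]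
  rcases Nat.lt_or_ge m b with h | h
  · simp [show m + 1 - b = 0 by omega]
  · obtain ⟨k, rfl⟩ := Nat.exists_eq_add_of_le h
    rw [show b + k + 1 - b = k + 1 by omega, Nat.add_sub_cancel]
    ring

lemma Real.exp_neg_le_one_sub_half {x : ℝ} (h0 : 0 ≤ x) (h1 : x ≤ 1) : exp (-x) ≤ 1 - x / 2 := by
  have := convexOn_exp.2 (Set.mem_univ (-1)) (Set.mem_univ 0) h0 (sub_nonneg.2 h1) (by ring)
  simp only [smul_eq_mul, mul_neg, mul_one, mul_zero, add_zero, exp_zero] at this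
  nlinarith [exp_neg_one_lt_half]

section Chernoff

variable {Ω : Type*} [MeasurableSpace Ω] {μ : Measure Ω}

lemma IsUniformOn.mgf_neg_inv_le {Y : Ω → ℕ} {b m : ℕ} (hY : Measurable Y)
    (h : IsUniformOn μ Y (Icc b m)) (hbm : b ≤ m) (hm : 0 < m) :
    mgf (fun ω => (Y ω : ℝ)) μ (-(m : ℝ)⁻¹) ≤ 3 / 4 := by
  have hN : (0 : ℝ) < #(Icc b m) := Nat.cast_pos.2 (card_pos.2 (nonempty_Icc.2 hbm))
  have hm' : (0 : ℝ) < m := Nat.cast_pos.2 hm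
  have hgauss : (∑ a ∈ Icc b m, (a : ℝ)) * 2 = #(Icc b m) * (b + m) := by
    simpa using congrArg (Nat.cast : ℕ → ℝ) (Finset.sum_Icc_id_mul_two b m)
  have hterm : ∀ a ∈ Icc b m, exp (-(m : ℝ)⁻¹ * a) ≤ 1 - a / m / 2 := fun a ha => by
    rw [neg_mul, inv_mul_eq_div]
    exact exp_neg_le_one_sub_half (by positivity)
      ((div_le_one hm').2 (Nat.cast_le.2 (mem_Icc.1 ha).2))
  rw [mgf, h.integral_comp hY fun a => exp (-(m : ℝ)⁻¹ * a)]
  calc (#(Icc b m) : ℝ)⁻¹ * ∑ a ∈ Icc b m, exp (-(m : ℝ)⁻¹ * a)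
      ≤ (#(Icc b m) : ℝ)⁻¹ * ∑ a ∈ Icc b m, (1 - (a : ℝ) / m / 2) := by
        gcongr with a ha
        exact hterm a ha
    _ = 1 - (b + m) / (4 * m) := by
      rw [sum_sub_distrib, ← sum_div, ← sum_div, sum_const, nsmul_one]
      field_simp
      linear_combination (-2) * hgauss
    _ ≤ 3 / 4 := by
      rw [sub_le_comm, le_div_iff₀ (by positivity)]
      linarith [Nat.cast_nonneg (α := ℝ) b]

variable {ι : Type*} [Fintype ι] {Y : ι → Ω → ℕ} {b m : ℕ}

lemma measure_sum_le_le_of_isUniformOn_Icc [IsFiniteMeasure μ] (hY : ∀ i, Measurable (Y i))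
    (hindep : iIndepFun Y μ)
    (hunif : ∀ i, IsUniformOn μ (Y i) (Icc b m)) (hbm : b ≤ m) (hm : 0 < m) (ε : ℝ) :
    μ {ω | ∑ i, (Y i ω : ℝ) ≤ ε} ≤ ENNReal.ofReal (exp (ε / m - Fintype.card ι / 4)) := by
  set X : ι → Ω → ℝ := fun i ω => Y i ω
  have hX : ∀ i, Measurable (X i) := fun i => measurable_from_top.comp (hY i)
  have hXindep : iIndepFun X μ := hindep.comp _ fun _ => measurable_from_top
  have hsum : (fun ω => ∑ i, X i ω) = ∑ i, X i := by ext ω; simp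
  have hint : Integrable (fun ω => exp (-(m : ℝ)⁻¹ * ∑ i, X i ω)) μ := by
    refine (integrable_const 1).mono' ?_ (ae_of_all _ fun ω => ?_)
    · exact (((Finset.measurable_sum _ fun i _ => hX i).const_mul _).exp).aestronglyMeasurable
    · rw [norm_of_nonneg (exp_nonneg _), exp_le_one_iff, neg_mul]
      exact neg_nonpos.2 (by positivity)
  have hmgf : mgf (fun ω => ∑ i, X i ω) μ (-(m : ℝ)⁻¹) ≤ exp (-(Fintype.card ι / 4)) :=
    calc mgf (fun ω => ∑ i, X i ω) μ (-(m : ℝ)⁻¹) = ∏ i, mgf (X i) μ (-(m : ℝ)⁻¹) := by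
          rw [hsum, hXindep.mgf_sum hX]
      _ ≤ ∏ _i : ι, exp (-(1 / 4)) :=
          prod_le_prod (fun i _ => mgf_nonneg) fun i _ =>
            ((hunif i).mgf_neg_inv_le (hY i) hbm hm).trans (by linarith [add_one_le_exp (-(1 / 4))])
      _ = exp (-(Fintype.card ι / 4)) := by
          rw [prod_const, card_univ, ← exp_nat_mul]; ring_nf
  refine (ENNReal.le_ofReal_iff_toReal_le (measure_ne_top _ _) (exp_nonneg _)).2 ?_
  calc μ.real {ω | ∑ i, X i ω ≤ ε}
      ≤ exp (-(-(m : ℝ)⁻¹) * ε) * mgf (fun ω => ∑ i, X i ω) μ (-(m : ℝ)⁻¹) :=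
        measure_le_le_exp_mul_mgf ε (by simp) hint
    _ ≤ exp (ε / m) * exp (-(Fintype.card ι / 4)) := by
        rw [neg_neg, inv_mul_eq_div]; gcongr
    _ = exp (ε / m - Fintype.card ι / 4) := by rw [← exp_add]; ring_nf

lemma ae_sum_le_of_isUniformOn_Icc (hY : ∀ i, Measurable (Y i))
    (hunif : ∀ i, IsUniformOn μ (Y i) (Icc b m)) :
    ∀ᵐ ω ∂μ, ∑ i, (Y i ω : ℝ) ≤ Fintype.card ι * m := by
  filter_upwards [ae_all_iff.2 fun i => (hunif i).ae_mem (hY i)] with ω hω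
  calc ∑ i, (Y i ω : ℝ) ≤ ∑ _i : ι, (m : ℝ) :=
        sum_le_sum fun i _ => Nat.cast_le.2 (mem_Icc.1 (hω i)).2
    _ = Fintype.card ι * m := by simp

lemma one_sub_exp_le_measure_sum_mem_Icc [IsProbabilityMeasure μ] (hY : ∀ i, Measurable (Y i))
    (hindep : iIndepFun Y μ) (hunif : ∀ i, IsUniformOn μ (Y i) (Icc b m)) (hbm : b ≤ m) (hm : 0 < m) {lo hi : ℝ}
    (hhi : Fintype.card ι * m ≤ hi) :
    1 - ENNReal.ofReal (exp (lo / m - Fintype.card ι / 4)) ≤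
      μ {ω | lo ≤ ∑ i, (Y i ω : ℝ) ∧ ∑ i, (Y i ω : ℝ) ≤ hi} := by
  have hS : Measurable fun ω => ∑ i, (Y i ω : ℝ) :=
    Finset.measurable_sum _ fun i _ => measurable_from_top.comp (hY i)
  calc 1 - ENNReal.ofReal (exp (lo / m - Fintype.card ι / 4))
      ≤ 1 - μ {ω | ∑ i, (Y i ω : ℝ) ≤ lo} :=
        tsub_le_tsub_left (measure_sum_le_le_of_isUniformOn_Icc hY hindep hunif hbm hm lo) 1
    _ = μ {ω | lo < ∑ i, (Y i ω : ℝ)} := by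
        rw [← prob_compl_eq_one_sub (measurableSet_le hS measurable_const)]
        simp only [Set.compl_ofPred, not_le]
    _ ≤ μ {ω | lo ≤ ∑ i, (Y i ω : ℝ) ∧ ∑ i, (Y i ω : ℝ) ≤ hi} := by
        refine measure_mono_ae ?_
        filter_upwards [ae_sum_le_of_isUniformOn_Icc hY hunif] with ω hω hlo
        exact ⟨le_of_lt hlo, hω.trans hhi⟩

end Chernoff

theorem stmt5_general (b : ℕ → ℕ)
    (hb0 : Filter.Tendsto (fun m : ℕ => (b m : ℝ) / m) Filter.atTop (nhds 0)) :
    ∃ c₁ c₂ c₃ : ℝ, 0 < c₁ ∧ 0 < c₂ ∧ 0 < c₃ ∧ ∃ m₀ : ℕ, ∀ m ≥ m₀,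
      ∀ (Ω : Type) (_ : MeasurableSpace Ω) (Pr : Measure Ω), IsProbabilityMeasure Pr →
        ∀ Y : Fin (4 * (m - b m + 1)) → Ω → ℕ,
          (∀ i, Measurable (Y i)) →
          iIndepFun Y Pr →
          (∀ i a, Pr {ω | Y i ω = a} =
            if a ∈ Finset.Icc (b m) m then ((m - b m + 1 : ℕ) : ENNReal)⁻¹ else 0) →
          1 - ENNReal.ofReal (2 * Real.exp (-(c₃ * m))) ≤
            Pr {ω | c₁ * (m : ℝ) ^ 2 ≤ (∑ i, (Y i ω : ℝ)) ∧
                (∑ i, (Y i ω : ℝ)) ≤ c₂ * (m : ℝ) ^ 2} := by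
  refine ⟨1 / 4, 8, 1 / 4, by norm_num, by norm_num, by norm_num, ?_⟩
  obtain ⟨m₀, hm₀⟩ := Filter.eventually_atTop.1 <|
    (hb0.eventually (ge_mem_nhds (by norm_num : (0 : ℝ) < 1 / 2))).and
      (Filter.eventually_ge_atTop 1)
  refine ⟨m₀, fun m hm Ω _ Pr _ Y hY hindep hlaw => ?_⟩
  obtain ⟨hratio, hm1⟩ := hm₀ m hm
  have hm' : (1 : ℝ) ≤ m := Nat.one_le_cast.2 hm1
  have hb : (b m : ℝ) ≤ m / 2 := by
    rwa [div_le_iff₀ (by positivity), div_mul_eq_mul_div, one_mul] at hratio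
  have hbm : b m ≤ m := by exact_mod_cast (show (b m : ℝ) ≤ m by linarith)
  have hunif : ∀ i, IsUniformOn Pr (Y i) (Icc (b m) m) := fun i a => by
    rw [hlaw i a, Nat.card_Icc, Nat.sub_add_comm hbm]
  have hcard : (Fintype.card (Fin (4 * (m - b m + 1))) : ℝ) = 4 * (m - b m + 1) := by
    simp [Nat.cast_sub hbm]
  refine le_trans (tsub_le_tsub_left (ENNReal.ofReal_le_ofReal ?_) 1)
    (one_sub_exp_le_measure_sum_mem_Icc hY hindep hunif hbm (by omega) ?_)
  · rw [hcard]
    calc exp (1 / 4 * m ^ 2 / m - 4 * (m - b m + 1) / 4) ≤ exp (-(1 / 4 * m)) := by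
          gcongr; field_simp; nlinarith
      _ ≤ 2 * exp (-(1 / 4 * m)) := by linarith [exp_pos (-(1 / 4 * (m : ℝ)))]
  · rw [hcard]; nlinarith

/-- Let `b : ℕ → ℕ` satisfy `b m < m` for all large `m` and `b m / m → 0`.  With
`M = m − b m + 1` and `z = 4M`, for independent `Y₁, …, Y_z` uniform on `{b m, …, m}`,
there are constants `c₁, c₂, c₃ > 0` and `m₀` such that for all `m ≥ m₀`,
`P(c₁ m² ≤ ∑ Yᵢ ≤ c₂ m²) ≥ 1 − 2 exp(−c₃ m)`. -/
theorem stmt5 (b : ℕ → ℕ) (hb : ∀ᶠ m in Filter.atTop, b m < m)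
    (hb0 : Filter.Tendsto (fun m : ℕ => (b m : ℝ) / m) Filter.atTop (nhds 0)) :
    ∃ c₁ c₂ c₃ : ℝ, 0 < c₁ ∧ 0 < c₂ ∧ 0 < c₃ ∧ ∃ m₀ : ℕ, ∀ m ≥ m₀,
      ∀ (Ω : Type) (_ : MeasurableSpace Ω) (Pr : Measure Ω), IsProbabilityMeasure Pr →
        ∀ Y : Fin (4 * (m - b m + 1)) → Ω → ℕ,
          (∀ i, Measurable (Y i)) →
          iIndepFun Y Pr →
          (∀ i a, Pr {ω | Y i ω = a} =
            if a ∈ Finset.Icc (b m) m then ((m - b m + 1 : ℕ) : ENNReal)⁻¹ else 0) →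
          1 - ENNReal.ofReal (2 * Real.exp (-(c₃ * m))) ≤
            Pr {ω | c₁ * (m : ℝ) ^ 2 ≤ (∑ i, (Y i ω : ℝ)) ∧
                (∑ i, (Y i ω : ℝ)) ≤ c₂ * (m : ℝ) ^ 2} :=
  stmt5_general b hb0
end

section
/- Let I be a finite set with |I| = M ≥ 1. Let X₁, …, X_{⌈4M⌉} be independent uniform samples from I and let S^{rep} = {X₁, …, X_{⌈4M⌉}} be the (random) set of values observed at least once. Let S^{ind} ⊆ I be the random subset including each element of I independently with probability 1 − e^{−2}. Then for every family U of subsets of I that is upward closed under inclusion (i.e., A ∈ U and A ⊆ B ⊆ I imply B ∈ U), P(S^{rep} ∈ U) ≥ P(S^{ind} ∈ U) − exp(−(4 log 2 − 2) M). -/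
/-!
Poissonization. Draw `N ~ Poisson(2M)` uniform samples instead of `4M`: then every element of `I`
is observed a `Poisson(2)` number of times, independently, so the observed set has exactly the law
of `S^ind`. Both laws are determined by the probabilities of the events `S ⊆ A`, and each of these
equals `e^{-2(M - |A|)}`. As `U` is upward closed, `P(S_k ∈ U)` is nondecreasing in the number `k`
of samples, hence `P(S^ind ∈ U) ≤ P(S^rep ∈ U) + P(N > 4M)`, and by Markov's inequality
applied to `2^N`, `P(N > 4M) ≤ E[2^N] / 2^{4M} = e^{2M} / 2^{4M}`.
-/

open MeasureTheory

/-- The law of `⌈4M⌉` independent uniform samples from a nonempty finite set `I`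
(`M = |I|`): the product of uniform measures on `Fin (4M) → I`. -/
noncomputable def uniformSamplesMeasure (I : Type*) [Fintype I] [Nonempty I]
    [MeasurableSpace I] : Measure (Fin (4 * Fintype.card I) → I) :=
  Measure.pi fun _ => (PMF.uniformOfFintype I).toMeasure

/-- The product Bernoulli measure on indicator functions `I → Bool` with inclusion
probability `1 − e⁻²` for each element independently. -/
noncomputable def bernoulliIndMeasure (I : Type*) [Fintype I] [MeasurableSpace I] :
    Measure (I → Bool) :=
  Measure.pi fun _ =>
    (PMF.bernoulli (Real.toNNReal (1 - Real.exp (-2)))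
      (Real.toNNReal_le_one.mpr (by
        have := Real.exp_pos (-2 : ℝ); linarith))).toMeasure

open ProbabilityTheory Finset Real
open scoped ENNReal NNReal Nat

theorem ENNReal.eq_of_forall_sum_powerset_eq {α : Type*} {f g : Finset α → ℝ≥0∞}
    (hf : ∀ A, f A ≠ ⊤)
    (h : ∀ A : Finset α, ∑ B ∈ A.powerset, f B = ∑ B ∈ A.powerset, g B) :
    f = g := by
  classical
  funext A
  induction A using Finset.strongInduction with
  | H A ih =>
    have hsub : ∑ B ∈ A.powerset.erase A, f B = ∑ B ∈ A.powerset.erase A, g B :=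
      sum_congr rfl fun B hB =>
        ih B ((mem_powerset.mp (mem_of_mem_erase hB)).ssubset_of_ne (ne_of_mem_erase hB))
    have hA := h A
    rw [← add_sum_erase _ _ (mem_powerset_self A),
      ← add_sum_erase _ _ (mem_powerset_self A), ← hsub] at hA
    exact (ENNReal.add_left_inj (ENNReal.sum_ne_top.mpr fun B _ => hf B)).mp hA

theorem measure_setOf_mem_finset {Ω α : Type*} [MeasurableSpace Ω] [DiscreteMeasurableSpace Ω]
    (μ : Measure Ω) (f : Ω → α) (T : Finset α) :
    μ {ω | f ω ∈ T} = ∑ a ∈ T, μ {ω | f ω = a} :=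
  (sum_measure_preimage_singleton T fun _ _ => .of_discrete).symm

theorem lintegral_le_add_measure_Ioi_of_monotone {μ : Measure ℕ} [IsProbabilityMeasure μ]
    {w : ℕ → ℝ≥0∞} (hw : Monotone w) (hw1 : ∀ k, w k ≤ 1) (n : ℕ) :
    ∫⁻ k, w k ∂μ ≤ w n + μ (Set.Ioi n) := by
  have hle (k : ℕ) : w k ≤ w n + (Set.Ioi n).indicator 1 k := by
    rcases le_or_gt k n with hk | hk
    · exact le_add_right (hw hk)
    · simpa [hk] using le_add_left (hw1 k)
  calc ∫⁻ k, w k ∂μ ≤ ∫⁻ k, w n + (Set.Ioi n).indicator 1 k ∂μ := lintegral_mono hle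
    _ = w n + μ (Set.Ioi n) := by
      rw [lintegral_add_left measurable_const, lintegral_const, measure_univ, mul_one,
        lintegral_indicator_one measurableSet_Ioi]

theorem lintegral_poissonMeasure_pow (r c : ℝ≥0) :
    ∫⁻ k, (c : ℝ≥0∞) ^ k ∂Po(r) = ENNReal.ofReal (exp (r * (c - 1))) := by
  have hsum := (NormedSpace.expSeries_div_hasSum_exp (r * c : ℝ)).mul_left (exp (-r))
  rw [← Real.exp_eq_exp_ℝ, ← Real.exp_add] at hsum
  have hterm (k : ℕ) : (c : ℝ≥0∞) ^ k * Po(r) {k}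
      = ENNReal.ofReal (exp (-r) * ((r * c : ℝ) ^ k / k !)) := by
    rw [poissonMeasure_singleton, ← ENNReal.ofReal_coe_nnreal,
      ← ENNReal.ofReal_pow c.coe_nonneg, ← ENNReal.ofReal_mul (by positivity)]
    congr 1
    rw [mul_pow]
    ring
  rw [lintegral_countable', tsum_congr hterm,
    ← ENNReal.ofReal_tsum_of_nonneg (fun k => by positivity) hsum.summable, hsum.tsum_eq]
  ring_nf

theorem poissonMeasure_Ioi_le (r : ℝ≥0) {c : ℝ≥0} (hc : 1 ≤ c) (n : ℕ) :
    Po(r) (Set.Ioi n) ≤ ENNReal.ofReal (exp (r * (c - 1))) / (c : ℝ≥0∞) ^ n := by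
  have hc0 : (c : ℝ≥0∞) ≠ 0 := by positivity
  calc Po(r) (Set.Ioi n) ≤ Po(r) {k | (c : ℝ≥0∞) ^ n ≤ (c : ℝ≥0∞) ^ k} :=
        measure_mono fun k hk => pow_le_pow_right₀ (ENNReal.one_le_coe_iff.mpr hc) hk.le
    _ ≤ (∫⁻ k, (c : ℝ≥0∞) ^ k ∂Po(r)) / (c : ℝ≥0∞) ^ n :=
        meas_ge_le_lintegral_div Measurable.of_discrete.aemeasurable (pow_ne_zero _ hc0)
          (by simp)
    _ = ENNReal.ofReal (exp (r * (c - 1))) / (c : ℝ≥0∞) ^ n := by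
      rw [lintegral_poissonMeasure_pow]

section RandomSubsets

variable {I : Type*} [Fintype I] [DecidableEq I] [MeasurableSpace I]

omit [Fintype I] in
theorem measure_pi_image_subset (ν : Measure I) [IsProbabilityMeasure ν] (k : ℕ)
    (A : Finset I) :
    Measure.pi (fun _ : Fin k => ν) {X | univ.image X ⊆ A} = ν A ^ k := by
  have hset : {X : Fin k → I | univ.image X ⊆ A} = Set.univ.pi fun _ => (A : Set I) := by
    ext X
    simp [image_subset_iff]
  rw [hset, Measure.pi_pi, prod_const, card_univ, Fintype.card_fin]

theorem monotone_measure_pi_image_mem [MeasurableSingletonClass I] (ν : Measure I)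
    [IsProbabilityMeasure ν] {U : Set (Finset I)}
    (hU : ∀ A B : Finset I, A ∈ U → A ⊆ B → B ∈ U) :
    Monotone fun k => Measure.pi (fun _ : Fin k => ν) {X | univ.image X ∈ U} := by
  refine monotone_nat_of_le_succ fun k => ?_
  -- forgetting the last sample preserves the law and can only shrink the observed set
  have hpres := measurePreserving_piFinSuccAbove (fun _ : Fin (k + 1) => ν) (Fin.last k)
  calc Measure.pi (fun _ : Fin k => ν) {X | univ.image X ∈ U}
      = Measure.pi (fun _ : Fin (k + 1) => ν)
          (MeasurableEquiv.piFinSuccAbove (fun _ => I) (Fin.last k) ⁻¹'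
            (Set.univ ×ˢ {X | univ.image X ∈ U})) := by
        rw [hpres.measure_preimage MeasurableSet.of_discrete.nullMeasurableSet,
          Measure.prod_prod, measure_univ, one_mul]
    _ ≤ Measure.pi (fun _ : Fin (k + 1) => ν) {X | univ.image X ∈ U} := by
        refine measure_mono fun X hX => hU _ _ hX.2 ?_
        intro i hi
        obtain ⟨j, -, rfl⟩ := mem_image.mp hi
        exact mem_image_of_mem _ (mem_univ _)

omit [MeasurableSpace I] in
theorem measure_pi_filter_subset (β : Measure Bool) [IsProbabilityMeasure β] (A : Finset I) :
    Measure.pi (fun _ : I => β) {ω | univ.filter (ω · = true) ⊆ A}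
      = β {false} ^ (Fintype.card I - #A) := by
  have hset : {ω : I → Bool | univ.filter (ω · = true) ⊆ A}
      = Set.univ.pi fun i => if i ∈ A then Set.univ else {false} := by
    ext ω
    simp only [Set.mem_ofPred_eq, Set.mem_pi, Set.mem_univ, true_implies, subset_iff, mem_filter,
      mem_univ, true_and]
    refine forall_congr' fun i => ?_
    split_ifs <;> simp [*]
  rw [hset, Measure.pi_pi]
  simp only [apply_ite, prod_ite, measure_univ, prod_const_one, one_mul, prod_const]
  rw [filter_not, filter_mem_eq_inter, univ_inter, card_univ_sdiff]

omit [DecidableEq I] in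
theorem PMF.toMeasure_uniformOfFintype_finset [MeasurableSingletonClass I] [Nonempty I]
    (A : Finset I) :
    (PMF.uniformOfFintype I).toMeasure A = ((#A / Fintype.card I : ℝ≥0) : ℝ≥0∞) := by
  rw [PMF.toMeasure_uniformOfFintype_apply _ A.measurableSet, ENNReal.coe_div (by simp)]
  simp

theorem measure_pi_filter_eq_lintegral_poissonMeasure [MeasurableSingletonClass I] [Nonempty I]
    (β : Measure Bool) [IsProbabilityMeasure β] (r : ℝ≥0)
    (hβ : β {false} = ENNReal.ofReal (exp (-r))) (A : Finset I) :
    Measure.pi (fun _ : I => β) {ω | univ.filter (ω · = true) = A}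
      = ∫⁻ k, Measure.pi (fun _ : Fin k => (PMF.uniformOfFintype I).toMeasure)
          {X | univ.image X = A} ∂Po(r * Fintype.card I) := by
  revert A
  refine funext_iff.mp <| ENNReal.eq_of_forall_sum_powerset_eq (fun B => measure_ne_top _ _)
    fun A => ?_
  have hM : (0 : ℝ) < Fintype.card I := by exact_mod_cast Fintype.card_pos
  calc ∑ B ∈ A.powerset, Measure.pi (fun _ : I => β) {ω | univ.filter (ω · = true) = B}
      = Measure.pi (fun _ : I => β) {ω | univ.filter (ω · = true) ⊆ A} := by
        simp_rw [← measure_setOf_mem_finset, mem_powerset]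
    _ = ENNReal.ofReal (exp (r * Fintype.card I * ((#A / Fintype.card I : ℝ≥0) - 1))) := by
        rw [measure_pi_filter_subset, hβ, ← ENNReal.ofReal_pow (exp_pos _).le, ← exp_nat_mul,
          Nat.cast_sub A.card_le_univ]
        congr 2
        push_cast
        field_simp
        ring
    _ = ∫⁻ k, Measure.pi (fun _ : Fin k => (PMF.uniformOfFintype I).toMeasure)
          {X | univ.image X ⊆ A} ∂Po(r * Fintype.card I) := by
        simp_rw [measure_pi_image_subset, PMF.toMeasure_uniformOfFintype_finset,
          lintegral_poissonMeasure_pow]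
        push_cast
        rfl
    _ = ∑ B ∈ A.powerset,
          ∫⁻ k, Measure.pi (fun _ : Fin k => (PMF.uniformOfFintype I).toMeasure)
            {X | univ.image X = B} ∂Po(r * Fintype.card I) := by
        rw [← lintegral_finsetSum _ fun _ _ => .of_discrete]
        simp_rw [← measure_setOf_mem_finset, mem_powerset]

theorem measure_pi_filter_mem_eq_lintegral_poissonMeasure [MeasurableSingletonClass I]
    [Nonempty I] (β : Measure Bool) [IsProbabilityMeasure β] (r : ℝ≥0)
    (hβ : β {false} = ENNReal.ofReal (exp (-r))) (U : Set (Finset I)) :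
    Measure.pi (fun _ : I => β) {ω | univ.filter (ω · = true) ∈ U}
      = ∫⁻ k, Measure.pi (fun _ : Fin k => (PMF.uniformOfFintype I).toMeasure)
          {X | univ.image X ∈ U} ∂Po(r * Fintype.card I) := by
  obtain ⟨T, rfl⟩ : ∃ T : Finset (Finset I), ↑T = U := ⟨U.toFinite.toFinset, by simp⟩
  simp only [mem_coe, measure_setOf_mem_finset,
    measure_pi_filter_eq_lintegral_poissonMeasure β r hβ,
    ← lintegral_finsetSum _ fun _ _ => .of_discrete]

end RandomSubsets

theorem PMF.toMeasure_bernoulli_one_sub_exp_false {r : ℝ} (hr : 0 ≤ r)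
    (h : Real.toNNReal (1 - exp (-r)) ≤ 1) :
    (PMF.bernoulli (Real.toNNReal (1 - exp (-r))) h).toMeasure {false}
      = ENNReal.ofReal (exp (-r)) := by
  have hexp : exp (-r) ≤ 1 := exp_le_one_iff.mpr (neg_nonpos.mpr hr)
  rw [PMF.toMeasure_apply_singleton _ _ (measurableSet_singleton _), PMF.bernoulli_apply,
    cond_false, ENNReal.coe_sub, ENNReal.coe_one, ← ENNReal.ofReal.eq_def, ← ENNReal.ofReal_one,
    ← ENNReal.ofReal_sub _ (by linarith), sub_sub_cancel]

theorem ofReal_exp_div_two_pow (M : ℕ) :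
    ENNReal.ofReal (exp ((2 * M : ℝ≥0) * ((2 : ℝ≥0) - 1))) / (2 : ℝ≥0) ^ (4 * M)
      = ENNReal.ofReal (exp (-((4 * log 2 - 2) * M))) := by
  have h2 : ((2 : ℝ≥0) : ℝ≥0∞) ^ (4 * M)
      = ENNReal.ofReal (exp ((4 * M : ℕ) * log 2)) := by
    rw [exp_nat_mul, exp_log two_pos, ENNReal.ofReal_pow zero_le_two]
    norm_num
  rw [h2, ← ENNReal.ofReal_div_of_pos (exp_pos _), ← exp_sub]
  congr 2
  push_cast
  ring

/-- Domination of the sampled-with-replacement set over an independent Bernoulli set: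
for `S^rep` the set of values observed among `4M` independent uniform samples from `I`
and `S^ind` the Bernoulli(`1 − e⁻²`) random subset of `I`, and every family `U` of
subsets of `I` upward closed under inclusion,
`P(S^rep ∈ U) ≥ P(S^ind ∈ U) − exp(−(4 log 2 − 2) M)`. -/
theorem stmt7 (I : Type*) [Fintype I] [Nonempty I] [DecidableEq I]
    [MeasurableSpace I] [MeasurableSingletonClass I]
    (U : Set (Finset I))
    (hU : ∀ A B : Finset I, A ∈ U → A ⊆ B → B ∈ U) :
    bernoulliIndMeasure I {ω | (Finset.univ.filter fun i => ω i = true) ∈ U} -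
        ENNReal.ofReal (Real.exp (-((4 * Real.log 2 - 2) * (Fintype.card I : ℝ)))) ≤
      uniformSamplesMeasure I {X | Finset.univ.image X ∈ U} := by
  rw [tsub_le_iff_right, ← ofReal_exp_div_two_pow]
  calc bernoulliIndMeasure I {ω | (univ.filter fun i => ω i = true) ∈ U}
      = ∫⁻ k, Measure.pi (fun _ : Fin k => (PMF.uniformOfFintype I).toMeasure)
          {X | univ.image X ∈ U} ∂Po(2 * Fintype.card I) :=
        measure_pi_filter_mem_eq_lintegral_poissonMeasure _ 2
          (PMF.toMeasure_bernoulli_one_sub_exp_false zero_le_two _) U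
    _ ≤ uniformSamplesMeasure I {X | univ.image X ∈ U}
          + Po(2 * Fintype.card I) (Set.Ioi (4 * Fintype.card I)) :=
        lintegral_le_add_measure_Ioi_of_monotone (monotone_measure_pi_image_mem _ hU)
          (fun _ => prob_le_one) _
    _ ≤ _ := add_le_add le_rfl (poissonMeasure_Ioi_le _ one_le_two _)
end

section
/- In a dense block cycle of length ℓ ≥ 1 with block size d ≥ 1, every trajectory reaches a limit cycle within ℓ synchronous updates: for every state x, F^{2ℓ}(x) = F^{ℓ}(x). -/
/-!
The block sum `∑ i, x j i` is the field felt by block `j + 1`. If the block sum of `j - 1` is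
nonzero, block `j` is overwritten by its sign, so the block sum of `j` becomes nonzero with the
same sign; a nonzero block sum also stays nonzero. If all block sums vanish the state is fixed.
Otherwise a nonzero block sum spreads one block per step around the cycle, so after `ℓ - 1`
steps all block sums are nonzero, and from then on each update only rotates the block signs by
one position, which has period `ℓ`.
-/

/-- The synchronous update map of a dense block cycle of length `ℓ` with block size `d`:
neuron `i` in block `j` becomes the sign of the sum of the previous block's states,
keeping its old state on a tie. -/
def hopfieldUpdate (ℓ d : ℕ) (x : ZMod ℓ → Fin d → ℤ) : ZMod ℓ → Fin d → ℤ :=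
  fun j i => if (∑ i', x (j - 1) i') = 0 then x j i else Int.sign (∑ i', x (j - 1) i')

def blockSum {ℓ d : ℕ} (x : ZMod ℓ → Fin d → ℤ) (j : ZMod ℓ) : ℤ := ∑ i, x j i

namespace hopfieldUpdate

variable {ℓ d : ℕ}

local notation "F" => hopfieldUpdate ℓ d

lemma apply_of_blockSum_eq_zero {x : ZMod ℓ → Fin d → ℤ} {j : ZMod ℓ}
    (h : blockSum x (j - 1) = 0) : F x j = x j := by
  funext i
  exact if_pos h

lemma apply_of_blockSum_ne_zero {x : ZMod ℓ → Fin d → ℤ} {j : ZMod ℓ}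
    (h : blockSum x (j - 1) ≠ 0) : F x j = fun _ => (blockSum x (j - 1)).sign := by
  funext i
  exact if_neg h

lemma eq_self_of_forall_blockSum_eq_zero {x : ZMod ℓ → Fin d → ℤ}
    (h : ∀ j, blockSum x j = 0) : F x = x :=
  funext fun _ => apply_of_blockSum_eq_zero (h _)

lemma sign_blockSum_of_ne_zero {x : ZMod ℓ → Fin d → ℤ} {j : ZMod ℓ}
    (h : blockSum x (j - 1) ≠ 0) : (blockSum (F x) j).sign = (blockSum x (j - 1)).sign := by
  obtain ⟨i, -, -⟩ := Finset.exists_ne_zero_of_sum_ne_zero h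
  rw [blockSum, apply_of_blockSum_ne_zero h, Finset.sum_const, Finset.card_univ,
    Fintype.card_fin, nsmul_eq_mul, Int.sign_mul, Int.sign_sign,
    Int.sign_natCast_of_ne_zero i.pos.ne', one_mul]

lemma blockSum_ne_zero_of_prev {x : ZMod ℓ → Fin d → ℤ} {j : ZMod ℓ}
    (h : blockSum x (j - 1) ≠ 0) : blockSum (F x) j ≠ 0 := by
  intro h0
  apply h
  rw [← Int.sign_eq_zero_iff_zero, ← sign_blockSum_of_ne_zero h, h0, Int.sign_zero]

lemma blockSum_ne_zero_of_self {x : ZMod ℓ → Fin d → ℤ} {j : ZMod ℓ}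
    (h : blockSum x j ≠ 0) : blockSum (F x) j ≠ 0 := by
  by_cases hprev : blockSum x (j - 1) = 0
  · rwa [blockSum, apply_of_blockSum_eq_zero hprev]
  · exact blockSum_ne_zero_of_prev hprev

lemma blockSum_iterate_add_ne_zero {x : ZMod ℓ → Fin d → ℤ} {j : ZMod ℓ}
    (h : blockSum x j ≠ 0) {t n : ℕ} (htn : t ≤ n) : blockSum (F^[n] x) (j + t) ≠ 0 := by
  induction n generalizing t with
  | zero => simpa [Nat.le_zero.mp htn] using h
  | succ n ih =>
    rw [Function.iterate_succ_apply']
    rcases Nat.lt_or_eq_of_le htn with htn | rfl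
    · exact blockSum_ne_zero_of_self (ih (by omega))
    · apply blockSum_ne_zero_of_prev
      convert ih le_rfl using 2
      push_cast
      ring

lemma blockSum_iterate_ne_zero [NeZero ℓ] {x : ZMod ℓ → Fin d → ℤ} {j₀ : ZMod ℓ}
    (h : blockSum x j₀ ≠ 0) {n : ℕ} (hn : ℓ ≤ n + 1) (j : ZMod ℓ) :
    blockSum (F^[n] x) j ≠ 0 := by
  have hval : (j - j₀).val ≤ n := by have := ZMod.val_lt (j - j₀); omega
  simpa using blockSum_iterate_add_ne_zero h hval

lemma iterate_apply_of_forall_blockSum_ne_zero {x : ZMod ℓ → Fin d → ℤ}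
    (h : ∀ j, blockSum x j ≠ 0) (t : ℕ) :
    F^[t] (F x) = fun j _ => (blockSum x (j - 1 - t)).sign := by
  induction t generalizing x with
  | zero => simpa using funext fun j => apply_of_blockSum_ne_zero (h (j - 1))
  | succ t ih =>
    rw [Function.iterate_succ_apply, ih fun j => blockSum_ne_zero_of_self (h j)]
    funext j _
    rw [sign_blockSum_of_ne_zero (h _)]
    push_cast
    ring_nf

lemma iterate_self_apply_of_forall_blockSum_ne_zero {x : ZMod ℓ → Fin d → ℤ}
    (h : ∀ j, blockSum x j ≠ 0) : F^[ℓ] (F x) = F x := by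
  have h₀ := iterate_apply_of_forall_blockSum_ne_zero h 0
  rw [Function.iterate_zero_apply] at h₀
  rw [iterate_apply_of_forall_blockSum_ne_zero h, h₀, ZMod.natCast_self, Nat.cast_zero]

end hopfieldUpdate

open hopfieldUpdate in
theorem stmt12_general (ℓ d : ℕ) (hℓ : 1 ≤ ℓ) (x : ZMod ℓ → Fin d → ℤ) :
    (hopfieldUpdate ℓ d)^[2 * ℓ] x = (hopfieldUpdate ℓ d)^[ℓ] x := by
  have : NeZero ℓ := ⟨by omega⟩
  by_cases hquiet : ∀ j, blockSum x j = 0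
  · have hfix := eq_self_of_forall_blockSum_eq_zero hquiet
    rw [Function.iterate_fixed hfix, Function.iterate_fixed hfix]
  obtain ⟨j₀, hj₀⟩ := not_forall.mp hquiet
  have hactive := blockSum_iterate_ne_zero hj₀ (n := ℓ - 1) (by omega)
  have hsplit : (hopfieldUpdate ℓ d)^[ℓ] x =
      hopfieldUpdate ℓ d ((hopfieldUpdate ℓ d)^[ℓ - 1] x) := by
    rw [← Function.iterate_succ_apply' (hopfieldUpdate ℓ d), Nat.succ_eq_add_one,
      Nat.sub_add_cancel hℓ]
  rw [two_mul, Function.iterate_add_apply, hsplit,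
    iterate_self_apply_of_forall_blockSum_ne_zero hactive]

/-- In a dense block cycle of length `ℓ ≥ 1` with block size `d ≥ 1`, every
`±1`-valued trajectory reaches a limit cycle within `ℓ` synchronous updates:
`F^{2ℓ}(x) = F^{ℓ}(x)`. -/
theorem stmt12 (ℓ d : ℕ) (hℓ : 1 ≤ ℓ) (hd : 1 ≤ d) (x : ZMod ℓ → Fin d → ℤ)
    (hx : ∀ j i, x j i = 1 ∨ x j i = -1) :
    (hopfieldUpdate ℓ d)^[2 * ℓ] x = (hopfieldUpdate ℓ d)^[ℓ] x :=
  stmt12_general ℓ d hℓ x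
end

section
/- Let ℓ₁, …, ℓ_z ≥ 1 be integers and let W be the set of z-tuples (w₁, …, w_z) where each w_i : ZMod ℓ_i → Bool is an aperiodic word. The diagonal shift T, defined by T(w₁, …, w_z) = (σ w₁, …, σ w_z), maps W to itself, and every point of W has minimal period exactly L = lcm(ℓ₁, …, ℓ_z) under T. Consequently L divides |W| = ∏_{i=1}^z M₂(ℓ_i), and the number of distinct T-orbits in W equals ∏_{i=1}^z M₂(ℓ_i) / L. -/
/-- The diagonal shift `T` on `z`-tuples of cyclic binary words:
`T(w₁, …, w_z) = (σ w₁, …, σ w_z)`. -/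
def diagShift (z : ℕ) (ℓ : Fin z → ℕ) (w : ∀ i, ZMod (ℓ i) → Bool) :
    ∀ i, ZMod (ℓ i) → Bool :=
  fun i j => w i (j + 1)

lemma aperiodic_shift {m : ℕ} {v : ZMod m → Bool} (h : AperiodicWord v) :
    AperiodicWord (fun j => v (j + 1)) := by
  intro k hk hk' heq
  apply h k hk hk'
  funext j
  have h1 : j - 1 + (k : ZMod m) + 1 = j + k := by ring
  have h2 : j - 1 + (1 : ZMod m) = j := by ring
  have := congrFun heq (j - 1)
  simp only [] at this
  rw [h1, h2] at this
  exact this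

lemma len_dvd {m : ℕ} (hm : 0 < m) {v : ZMod m → Bool} (h : AperiodicWord v)
    {n : ℕ} (hfix : (fun j => v (j + (n : ZMod m))) = v) : m ∣ n := by
  by_contra hd
  have hk : n % m ≠ 0 := fun h0 => hd (Nat.dvd_of_mod_eq_zero h0)
  apply h (n % m) (Nat.pos_of_ne_zero hk) (Nat.mod_lt n hm)
  rw [show ((n % m : ℕ) : ZMod m) = (n : ZMod m) from ZMod.natCast_mod n m]
  exact hfix

lemma diagShift_iterate (z : ℕ) (ℓ : Fin z → ℕ) (w : ∀ i, ZMod (ℓ i) → Bool) (n : ℕ) :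
    (diagShift z ℓ)^[n] w = fun i j => w i (j + (n : ZMod (ℓ i))) := by
  induction n with
  | zero => funext i j; simp
  | succ n ih =>
    rw [Function.iterate_succ_apply', ih]
    funext i j
    show w i (j + 1 + (n : ZMod (ℓ i))) = w i (j + ((n + 1 : ℕ) : ZMod (ℓ i)))
    congr 1
    push_cast
    ring

/-- Let `W` be the set of `z`-tuples of aperiodic binary words of lengths
`ℓ₁, …, ℓ_z ≥ 1` and let `T` be the diagonal shift.  Then `T` maps `W` to itself, every
point of `W` has minimal period exactly `L = lcm(ℓ₁, …, ℓ_z)` under `T`,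
`|W| = ∏ᵢ M₂(ℓᵢ)`, `L` divides `|W|`, and the number of distinct `T`-orbits in `W`
equals `∏ᵢ M₂(ℓᵢ) / L`. -/
theorem stmt16 (z : ℕ) (ℓ : Fin z → ℕ) (hℓ : ∀ i, 1 ≤ ℓ i) :
    (∀ w : ∀ i, ZMod (ℓ i) → Bool,
        (∀ i, AperiodicWord (w i)) → ∀ i, AperiodicWord (diagShift z ℓ w i)) ∧
    (∀ w : ∀ i, ZMod (ℓ i) → Bool, (∀ i, AperiodicWord (w i)) →
        Function.minimalPeriod (diagShift z ℓ) w = Finset.univ.lcm ℓ) ∧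
    Nat.card {w : ∀ i, ZMod (ℓ i) → Bool // ∀ i, AperiodicWord (w i)} =
      ∏ i, M₂ (ℓ i) ∧
    Finset.univ.lcm ℓ ∣ ∏ i, M₂ (ℓ i) ∧
    Nat.card {O : Set (∀ i, ZMod (ℓ i) → Bool) //
        ∃ w, (∀ i, AperiodicWord (w i)) ∧
          O = {v | ∃ n : ℕ, (diagShift z ℓ)^[n] w = v}} =
      (∏ i, M₂ (ℓ i)) / Finset.univ.lcm ℓ := by
  set T := diagShift z ℓ with hT
  set L := Finset.univ.lcm ℓ with hLdef
  have hLpos : 0 < L := by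
    rcases Nat.eq_zero_or_pos L with h0 | h
    · exfalso
      rw [hLdef, Finset.lcm_eq_zero_iff] at h0
      obtain ⟨i, -, hi⟩ := h0
      have := hℓ i; omega
    · exact h
  have hdvd : ∀ i, ℓ i ∣ L := fun i => Finset.dvd_lcm (Finset.mem_univ i)
  have hcastL : ∀ i, ((L : ℕ) : ZMod (ℓ i)) = 0 := by
    intro i
    obtain ⟨c, hc⟩ := hdvd i
    rw [hc]
    push_cast
    simp [ZMod.natCast_self]
  have hTL : ∀ v, T^[L] v = v := by
    intro v
    rw [hT, diagShift_iterate]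
    funext i j
    rw [hcastL i, add_zero]
  have hTLid : T^[L] = id := funext hTL
  have iter_mod : ∀ (v : ∀ i, ZMod (ℓ i) → Bool) (n : ℕ), T^[n] v = T^[n % L] v := by
    intro v n
    conv_lhs => rw [← Nat.mod_add_div n L]
    rw [Function.iterate_add_apply]
    congr 1
    rw [Function.iterate_mul, hTLid, Function.iterate_id, id_eq]
  have conj1 : ∀ w : ∀ i, ZMod (ℓ i) → Bool,
      (∀ i, AperiodicWord (w i)) → ∀ i, AperiodicWord (diagShift z ℓ w i) := by
    intro w hw i
    exact aperiodic_shift (hw i)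
  have conj2 : ∀ w : ∀ i, ZMod (ℓ i) → Bool, (∀ i, AperiodicWord (w i)) →
      Function.minimalPeriod T w = L := by
    intro w hw
    have hper : Function.IsPeriodicPt T L w := hTL w
    have h1 : Function.minimalPeriod T w ∣ L := hper.minimalPeriod_dvd
    have hm : T^[Function.minimalPeriod T w] w = w :=
      Function.isPeriodicPt_minimalPeriod T w
    have h2 : L ∣ Function.minimalPeriod T w := by
      apply Finset.lcm_dvd
      intro i _
      apply len_dvd (hℓ i) (hw i)
      rw [hT, diagShift_iterate] at hm
      exact congrFun hm i
    exact Nat.dvd_antisymm h1 h2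
  have conj3 : Nat.card {w : ∀ i, ZMod (ℓ i) → Bool // ∀ i, AperiodicWord (w i)} =
      ∏ i, M₂ (ℓ i) := by
    rw [Nat.card_congr (Equiv.subtypePiEquivPi
      (p := fun i (v : ZMod (ℓ i) → Bool) => AperiodicWord v)), Nat.card_pi]
    rfl
  have Tinj : Function.Injective T := by
    intro a b hab
    funext i j
    have := congrFun (congrFun hab i) (j - 1)
    simpa [hT, diagShift] using this
  have iterInj : ∀ n : ℕ, Function.Injective (T^[n]) := fun n => Tinj.iterate n
  have hiter_ap : ∀ (v : ∀ i, ZMod (ℓ i) → Bool) (n : ℕ),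
      (∀ i, AperiodicWord (v i)) → ∀ i, AperiodicWord ((T^[n] v) i) := by
    intro v n hv
    induction n with
    | zero => exact hv
    | succ n ih =>
      rw [Function.iterate_succ_apply']
      exact conj1 _ ih
  have orb_shift : ∀ (x : ∀ i, ZMod (ℓ i) → Bool) (k : ℕ),
      {v | ∃ n : ℕ, T^[n] (T^[k] x) = v} = {v | ∃ n : ℕ, T^[n] x = v} := by
    intro x k
    ext v
    constructor
    · rintro ⟨m, rfl⟩
      exact ⟨m + k, Function.iterate_add_apply T m k x⟩
    · rintro ⟨m, rfl⟩
      refine ⟨m + (L * (k + 1) - k), ?_⟩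
      have hkle : k ≤ L * (k + 1) := by nlinarith
      have h1 : m + (L * (k + 1) - k) + k = m + L * (k + 1) := by
        rw [Nat.add_assoc, Nat.sub_add_cancel hkle]
      calc T^[m + (L * (k + 1) - k)] (T^[k] x)
          = T^[m + (L * (k + 1) - k) + k] x := (Function.iterate_add_apply T _ k x).symm
        _ = T^[m + L * (k + 1)] x := by rw [h1]
        _ = T^[m] (T^[L * (k + 1)] x) := Function.iterate_add_apply T m _ x
        _ = T^[m] x := by rw [Function.iterate_mul, hTLid, Function.iterate_id, id_eq]
  set Orb := {O : Set (∀ i, ZMod (ℓ i) → Bool) //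
      ∃ w, (∀ i, AperiodicWord (w i)) ∧ O = {v | ∃ n : ℕ, T^[n] w = v}} with hOrb
  set W := {w : ∀ i, ZMod (ℓ i) → Bool // ∀ i, AperiodicWord (w i)} with hW
  have hcardW : Nat.card W = Nat.card Orb * L := by
    let g : Orb × Fin L → W := fun p =>
      ⟨T^[(p.2 : ℕ)] p.1.2.choose, hiter_ap _ _ p.1.2.choose_spec.1⟩
    have hginj : Function.Injective g := by
      rintro ⟨O, n⟩ ⟨O', n'⟩ h
      have h' : T^[(n : ℕ)] O.2.choose = T^[(n' : ℕ)] O'.2.choose :=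
        congrArg Subtype.val h
      have hOeq : O = O' := by
        apply Subtype.ext
        rw [O.2.choose_spec.2, O'.2.choose_spec.2,
          ← orb_shift O.2.choose (n : ℕ), ← orb_shift O'.2.choose (n' : ℕ), h']
      subst hOeq
      have key : ∀ a b : ℕ, a ≤ b → b < L →
          T^[a] O.2.choose = T^[b] O.2.choose → a = b := by
        intro a b hab hbL hEq
        obtain ⟨d, rfl⟩ : ∃ d, b = a + d := ⟨b - a, (Nat.add_sub_cancel' hab).symm⟩
        have hfix : T^[a] (T^[d] O.2.choose) = T^[a] O.2.choose :=
          ((Function.iterate_add_apply T a d O.2.choose).symm).trans hEq.symm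
        have hd : Function.IsPeriodicPt T d O.2.choose := iterInj a hfix
        have hdvd' : L ∣ d := by
          rw [← conj2 O.2.choose O.2.choose_spec.1]
          exact hd.minimalPeriod_dvd
        rcases Nat.eq_zero_of_dvd_of_lt hdvd'
          (lt_of_le_of_lt (Nat.le_add_left d a) hbL) with rfl
        rw [Nat.add_zero]
      have hnn' : (n : ℕ) = (n' : ℕ) := by
        rcases le_total (n : ℕ) (n' : ℕ) with hle | hle
        · exact key _ _ hle n'.2 h'
        · exact (key _ _ hle n.2 h'.symm).symm
      simp [Prod.ext_iff, Fin.ext_iff, hnn']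
    have hgsurj : Function.Surjective g := by
      intro w'
      have hex : ∃ w, (∀ i, AperiodicWord (w i)) ∧
          ({v | ∃ n : ℕ, T^[n] w'.1 = v} : Set _) = {v | ∃ n : ℕ, T^[n] w = v} :=
        ⟨w'.1, w'.2, rfl⟩
      let O : Orb := ⟨{v | ∃ n : ℕ, T^[n] w'.1 = v}, hex⟩
      have hmem : ∃ n : ℕ, T^[n] O.2.choose = w'.1 := by
        have hself : w'.1 ∈ ({v | ∃ n : ℕ, T^[n] w'.1 = v} : Set _) := ⟨0, rfl⟩
        have heq2 : ({v | ∃ n : ℕ, T^[n] w'.1 = v} : Set _) =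
            {v | ∃ n : ℕ, T^[n] O.2.choose = v} := O.2.choose_spec.2
        rw [heq2] at hself
        exact hself
      obtain ⟨n, hn⟩ := hmem
      refine ⟨(O, ⟨n % L, Nat.mod_lt n hLpos⟩), Subtype.ext ?_⟩
      show T^[n % L] O.2.choose = w'.1
      rw [← iter_mod, hn]
    calc Nat.card W = Nat.card (Orb × Fin L) :=
          Nat.card_congr (Equiv.ofBijective g ⟨hginj, hgsurj⟩).symm
      _ = Nat.card Orb * L := by
          rw [Nat.card_prod]
          congr 1
          rw [Nat.card_eq_fintype_card, Fintype.card_fin]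
  have hprod : ∏ i, M₂ (ℓ i) = Nat.card Orb * L := by rw [← conj3, hcardW]
  refine ⟨conj1, conj2, conj3, ?_, ?_⟩
  · rw [hprod]
    exact dvd_mul_left L (Nat.card Orb)
  · rw [hprod, Nat.mul_div_cancel _ hLpos]
end
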